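/- Zhang–Shasha recurrence: for nonempty forests F1, F2 with rightmost roots r_{F1}, r_{F2}, ed(F1, F2) = min( ed(F1 - r_{F1}, F2) + 1, ed(F1, F2 - r_{F2}) + 1, ed(R°_{F1}, R°_{F2}) + ed(L'_{F1}, L'_{F2}) + δ(r_{F1}, r_{F2}) ), and ed(F, ∅) = |F|. -/

import Mathlib

/-- Ordered rooted trees with node labels from `α`. -/
inductive Tree' (α : Type) : Type
  | node (label : α) (children : List (Tree' α))

/-- An ordered forest is an ordered list of trees. -/
abbrev Forest (α : Type) := List (Tree' α)

mutual
/-- Number of nodes of a tree. -/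
def Tree'.size {α : Type} : Tree' α → ℕ
  | .node _ cs => 1 + Forest.size cs
/-- Number of nodes of a forest. -/
def Forest.size {α : Type} : Forest α → ℕ
  | [] => 0
  | t :: ts => Tree'.size t + Forest.size ts
end

/-- A single edit operation on a forest: delete a node (promoting its children, in
order, to its parent) or relabel a node. -/
inductive EditStep {α : Type} : Forest α → Forest α → Prop
  | delete (pre : Forest α) (a : α) (cs post : Forest α) :
      EditStep (pre ++ Tree'.node a cs :: post) (pre ++ cs ++ post)
  | relabel (pre : Forest α) (a b : α) (cs post : Forest α) :
      EditStep (pre ++ Tree'.node a cs :: post) (pre ++ Tree'.node b cs :: post)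
  | inside (pre : Forest α) (a : α) {cs cs' : Forest α} (post : Forest α) :
      EditStep cs cs' →
      EditStep (pre ++ Tree'.node a cs :: post) (pre ++ Tree'.node a cs' :: post)

/-- `EditSteps n F G`: `G` is obtained from `F` by exactly `n` edit operations. -/
inductive EditSteps {α : Type} : ℕ → Forest α → Forest α → Prop
  | refl (F : Forest α) : EditSteps 0 F F
  | tail {n : ℕ} {F G H : Forest α} : EditSteps n F G → EditStep G H → EditSteps (n + 1) F H

/-- The (unweighted) tree edit distance: the minimum total number of relabelings
and deletions applied to `F1` and `F2` so that they become identical. -/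
noncomputable def ed {α : Type} (F1 F2 : Forest α) : ℕ :=
  sInf {k | ∃ (k1 k2 : ℕ) (G : Forest α), k = k1 + k2 ∧ EditSteps k1 F1 G ∧ EditSteps k2 F2 G}

/-- The similarity between two forests. -/
noncomputable def sim {α : Type} (F1 F2 : Forest α) : ℤ :=
  (Forest.size F1 : ℤ) + Forest.size F2 - ed F1 F2


/-!
The right-hand side of the recurrence, read as a definition by well-founded recursion on
total size, defines a function `zsDist`. Each of its three branches is realised by edit
sequences (delete a rightmost root; or edit the left parts and the children independently and
then relabel the roots), so `ed ≤ zsDist`. Conversely `zsDist` is symmetric, vanishes on the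
diagonal and drops by at most one under a single edit step, so a pair of edit sequences
`F →ᵏ¹ H ←ᵏ² G` gives `zsDist F G ≤ k₁ + k₂`, i.e. `zsDist ≤ ed`.
-/

variable {α : Type}

namespace Forest

@[simp] theorem size_nil : Forest.size ([] : Forest α) = 0 := rfl

@[simp] theorem size_cons (t : Tree' α) (ts : Forest α) :
    Forest.size (t :: ts) = t.size + ts.size := rfl

@[simp] theorem _root_.Tree'.size_node (a : α) (cs : Forest α) :
    (Tree'.node a cs).size = 1 + cs.size := rfl

@[simp] theorem size_append (X Y : Forest α) : (X ++ Y).size = X.size + Y.size := by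
  induction X with
  | nil => simp
  | cons t X ih => simp only [List.cons_append, size_cons, ih]; omega

@[simp] theorem size_reverse (X : Forest α) : Forest.size X.reverse = X.size := by
  induction X with
  | nil => rfl
  | cons t X ih => simp only [List.reverse_cons, size_append, ih, size_cons, size_nil]; omega

theorem rightmost_induction {P : Forest α → Forest α → Prop}
    (nil_left : ∀ G, P [] G) (nil_right : ∀ F, P F [])
    (concat : ∀ (ts1 ts2 cs1 cs2 : Forest α) (a1 a2 : α),
      (∀ F G : Forest α, F.size + G.size <
        ts1.size + cs1.size + ts2.size + cs2.size + 2 → P F G) →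
      P (ts1 ++ [.node a1 cs1]) (ts2 ++ [.node a2 cs2]))
    (F G : Forest α) : P F G := by
  induction hn : F.size + G.size using Nat.strong_induction_on generalizing F G with
  | _ n ih =>
  rcases List.eq_nil_or_concat F with rfl | ⟨ts1, ⟨a1, cs1⟩, rfl⟩
  · exact nil_left G
  rcases List.eq_nil_or_concat G with rfl | ⟨ts2, ⟨a2, cs2⟩, rfl⟩
  · exact nil_right _
  simp only [List.concat_eq_append] at hn ⊢
  refine concat ts1 ts2 cs1 cs2 a1 a2 fun F G hFG => ih _ ?_ F G rfl
  simp only [size_append, size_cons, Tree'.size_node, size_nil] at hn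
  omega

end Forest

theorem List.eq_or_exists_of_append_cons_eq_concat {β : Type*} {pre post ts : List β} {x y : β}
    (h : pre ++ x :: post = ts ++ [y]) :
    (pre = ts ∧ x = y ∧ post = []) ∨
      ∃ post', post = post' ++ [y] ∧ ts = pre ++ x :: post' := by
  rcases List.eq_nil_or_concat post with rfl | ⟨post', z, rfl⟩
  · simp_all
  · have h' : (pre ++ x :: post') ++ [z] = ts ++ [y] := by simpa using h
    obtain ⟨rfl, h⟩ := List.append_inj' h' rfl
    exact .inr ⟨post', by simp_all⟩

namespace EditStep

variable {F F' X Y : Forest α}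

theorem append_context (P Q : Forest α) (h : EditStep X Y) :
    EditStep (P ++ X ++ Q) (P ++ Y ++ Q) := by
  cases h with
  | delete pre a cs post => simpa using delete (P ++ pre) a cs (post ++ Q)
  | relabel pre a b cs post => simpa using relabel (P ++ pre) a b cs (post ++ Q)
  | inside pre a post h => simpa using inside (P ++ pre) a (post ++ Q) h

theorem delete_last (ts : Forest α) (a : α) (cs : Forest α) :
    EditStep (ts ++ [.node a cs]) (ts ++ cs) := by
  simpa using delete ts a cs []

theorem ne_nil (h : EditStep F F') : F ≠ [] := by
  cases h <;> simp

theorem size_le_succ (h : EditStep F F') : F.size ≤ F'.size + 1 := by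
  induction h <;> simp only [Forest.size_append, Forest.size_cons, Tree'.size_node] <;> omega

theorem concat_cases {ts : Forest α} {a : α} {cs : Forest α}
    (h : EditStep (ts ++ [.node a cs]) F') :
    (∃ ts', EditStep ts ts' ∧ F' = ts' ++ [.node a cs]) ∨ F' = ts ++ cs ∨
      (∃ b, F' = ts ++ [.node b cs]) ∨
      ∃ cs', EditStep cs cs' ∧ F' = ts ++ [.node a cs'] := by
  generalize hF : ts ++ [Tree'.node a cs] = F₀ at h
  cases h with
  | delete pre b ds post =>
    rcases List.eq_or_exists_of_append_cons_eq_concat hF.symm with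
      ⟨rfl, ⟨⟩, rfl⟩ | ⟨post', rfl, rfl⟩
    · simp
    · exact .inl ⟨_, delete pre b ds post', by simp⟩
  | relabel pre b c ds post =>
    rcases List.eq_or_exists_of_append_cons_eq_concat hF.symm with
      ⟨rfl, ⟨⟩, rfl⟩ | ⟨post', rfl, rfl⟩
    · simp
    · exact .inl ⟨_, relabel pre b c ds post', by simp⟩
  | inside pre b post hds =>
    rcases List.eq_or_exists_of_append_cons_eq_concat hF.symm with
      ⟨rfl, ⟨⟩, rfl⟩ | ⟨post', rfl, rfl⟩
    · exact .inr (.inr (.inr ⟨_, hds, rfl⟩))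
    · exact .inl ⟨_, inside pre b post' hds, by simp⟩

end EditStep

namespace EditSteps

variable {m n : ℕ} {F G H X Y : Forest α}

theorem trans (h₁ : EditSteps m F G) (h₂ : EditSteps n G H) : EditSteps (m + n) F H := by
  induction h₂ with
  | refl => exact h₁
  | tail _ st ih => exact .tail (ih h₁) st

theorem head (h₁ : EditStep F G) (h₂ : EditSteps n G H) : EditSteps (n + 1) F H := by
  simpa [add_comm] using (EditSteps.tail (.refl F) h₁).trans h₂

theorem append_context (P Q : Forest α) (h : EditSteps n X Y) :
    EditSteps n (P ++ X ++ Q) (P ++ Y ++ Q) := by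
  induction h with
  | refl => exact .refl _
  | tail _ st ih => exact .tail ih (st.append_context P Q)

theorem append {X' Y' : Forest α} (h₁ : EditSteps m X X') (h₂ : EditSteps n Y Y') :
    EditSteps (m + n) (X ++ Y) (X' ++ Y') := by
  have h₁' : EditSteps m (X ++ Y) (X' ++ Y) := by simpa using h₁.append_context [] Y
  have h₂' : EditSteps n (X' ++ Y) (X' ++ Y') := by simpa using h₂.append_context X' []
  exact h₁'.trans h₂'

theorem inside (P Q : Forest α) (a : α) {cs cs' : Forest α} (h : EditSteps n cs cs') :
    EditSteps n (P ++ .node a cs :: Q) (P ++ .node a cs' :: Q) := by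
  induction h with
  | refl => exact .refl _
  | tail _ st ih => exact .tail ih (.inside P a Q st)

theorem delete_all (F : Forest α) : EditSteps F.size F [] :=
  match F with
  | [] => .refl []
  | .node a cs :: ts => by
    have hsize : Forest.size (.node a cs :: ts) = Forest.size (cs ++ ts) + 1 := by
      simp only [Forest.size_cons, Tree'.size_node, Forest.size_append]; omega
    rw [hsize]
    exact (delete_all (cs ++ ts)).head (by simpa using EditStep.delete [] a cs ts)
termination_by F.size
decreasing_by simp only [Forest.size_append, Forest.size_cons, Tree'.size_node]; omega

end EditSteps

section EditDistance

variable {k₁ k₂ : ℕ} {F F' G G' H : Forest α}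

theorem ed_le_of_editSteps (h₁ : EditSteps k₁ F H) (h₂ : EditSteps k₂ G H) :
    ed F G ≤ k₁ + k₂ :=
  Nat.sInf_le ⟨k₁, k₂, H, rfl, h₁, h₂⟩

theorem exists_editSteps_of_ed (F G : Forest α) :
    ∃ k₁ k₂ H, ed F G = k₁ + k₂ ∧ EditSteps k₁ F H ∧ EditSteps k₂ G H :=
  Nat.sInf_mem
    (s := {k | ∃ k₁ k₂ H, k = k₁ + k₂ ∧ EditSteps k₁ F H ∧ EditSteps k₂ G H})
    ⟨_, F.size, G.size, [], rfl, .delete_all F, .delete_all G⟩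

theorem ed_comm (F G : Forest α) : ed F G = ed G F := by
  have key : ∀ X Y : Forest α, ed X Y ≤ ed Y X := fun X Y => by
    obtain ⟨k₁, k₂, H, hk, hY, hX⟩ := exists_editSteps_of_ed Y X
    simpa [hk, add_comm] using ed_le_of_editSteps hX hY
  exact (key F G).antisymm (key G F)

theorem ed_le_of_editStep_left (h : EditStep F F') (G : Forest α) : ed F G ≤ ed F' G + 1 := by
  obtain ⟨k₁, k₂, H, hk, h₁, h₂⟩ := exists_editSteps_of_ed F' G
  have := ed_le_of_editSteps (h₁.head h) h₂
  omega

theorem ed_le_of_editStep_right (F : Forest α) (h : EditStep G G') : ed F G ≤ ed F G' + 1 := by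
  rw [ed_comm, ed_comm F G']
  exact ed_le_of_editStep_left h F

theorem ed_nil_left_le (G : Forest α) : ed [] G ≤ G.size := by
  simpa using ed_le_of_editSteps (.refl []) (.delete_all G)

theorem ed_nil_right_le (F : Forest α) : ed F [] ≤ F.size := by
  simpa using ed_le_of_editSteps (.delete_all F) (.refl [])

theorem ed_concat_le [DecidableEq α] (ts1 ts2 cs1 cs2 : Forest α) (a1 a2 : α) :
    ed (ts1 ++ [.node a1 cs1]) (ts2 ++ [.node a2 cs2]) ≤
      ed cs1 cs2 + ed ts1 ts2 + (if a1 = a2 then 0 else 1) := by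
  obtain ⟨c₁, c₂, C, hc, hc₁, hc₂⟩ := exists_editSteps_of_ed cs1 cs2
  obtain ⟨t₁, t₂, T, ht, ht₁, ht₂⟩ := exists_editSteps_of_ed ts1 ts2
  have edit : ∀ {t c ts cs} (a : α), EditSteps t ts T → EditSteps c cs C →
      EditSteps (t + c) (ts ++ [.node a cs]) (T ++ [.node a C]) := fun a ht hc =>
    (ht.append (.refl _)).trans (hc.inside T [] a)
  have h₂ := edit a2 ht₂ hc₂
  split_ifs with ha
  · subst ha
    have := ed_le_of_editSteps (edit a1 ht₁ hc₁) h₂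
    omega
  · have := ed_le_of_editSteps ((edit a1 ht₁ hc₁).tail (.relabel T a1 a2 C [])) h₂
    omega

end EditDistance

section ZhangShasha

variable [DecidableEq α]

-- The recursion runs on reversed forests, so that the rightmost tree is the head of the list.
def zsDistRev : Forest α → Forest α → ℕ
  | [], G => G.size
  | F, [] => F.size
  | .node a cs :: X, .node b ds :: Y =>
      min (min (zsDistRev (cs.reverse ++ X) (.node b ds :: Y) + 1)
               (zsDistRev (.node a cs :: X) (ds.reverse ++ Y) + 1))
          (zsDistRev cs.reverse ds.reverse + zsDistRev X Y + if a = b then 0 else 1)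
termination_by F G => F.size + G.size
decreasing_by
  all_goals simp only [List.unattach_reverse, List.unattach_attach, Forest.size_append,
    Forest.size_reverse, Forest.size_cons, Tree'.size_node]
  all_goals omega

def zsDist (F G : Forest α) : ℕ := zsDistRev F.reverse G.reverse

@[simp] theorem zsDist_nil_left (G : Forest α) : zsDist [] G = G.size := by
  simp [zsDist, zsDistRev]

@[simp] theorem zsDist_nil_right (F : Forest α) : zsDist F [] = F.size := by
  rw [zsDist, List.reverse_nil, ← Forest.size_reverse F]
  cases F.reverse <;> simp [zsDistRev]

theorem zsDist_concat (ts1 ts2 cs1 cs2 : Forest α) (a1 a2 : α) :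
    zsDist (ts1 ++ [.node a1 cs1]) (ts2 ++ [.node a2 cs2]) =
      min (min (zsDist (ts1 ++ cs1) (ts2 ++ [.node a2 cs2]) + 1)
               (zsDist (ts1 ++ [.node a1 cs1]) (ts2 ++ cs2) + 1))
          (zsDist cs1 cs2 + zsDist ts1 ts2 + if a1 = a2 then 0 else 1) := by
  simp only [zsDist, List.reverse_append, List.reverse_cons, List.reverse_nil, List.nil_append,
    List.cons_append]
  rw [zsDistRev]

theorem zsDist_self (F : Forest α) : zsDist F F = 0 := by
  suffices ∀ F G : Forest α, F = G → zsDist F G = 0 from this F F rfl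
  refine Forest.rightmost_induction (by simp) (by simp) ?_
  intro ts1 ts2 cs1 cs2 a1 a2 ih h
  obtain ⟨rfl, rfl, rfl⟩ : ts1 = ts2 ∧ a1 = a2 ∧ cs1 = cs2 := by simpa using h
  rw [zsDist_concat, ih cs1 cs1 (by omega) rfl, ih ts1 ts1 (by omega) rfl]
  simp

theorem zsDist_comm (F G : Forest α) : zsDist F G = zsDist G F := by
  induction F, G using Forest.rightmost_induction with
  | nil_left G => simp
  | nil_right F => simp
  | concat ts1 ts2 cs1 cs2 a1 a2 ih =>
    rw [zsDist_concat, zsDist_concat, ih _ (ts2 ++ _) (by simp +arith), ih _ (ts2 ++ cs2)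
      (by simp +arith), ih cs1 cs2 (by omega), ih ts1 ts2 (by omega)]
    simp only [eq_comm (a := a1)]
    omega

theorem zsDist_le_of_editStep_left {F F' : Forest α} (h : EditStep F F') (G : Forest α) :
    zsDist F G ≤ zsDist F' G + 1 := by
  induction F, G using Forest.rightmost_induction generalizing F' with
  | nil_left G => exact absurd rfl h.ne_nil
  | nil_right F => simpa using h.size_le_succ
  | concat ts1 ts2 cs1 cs2 a1 a2 ih =>
    rcases h.concat_cases with ⟨ts', hts, rfl⟩ | rfl | ⟨b, rfl⟩ | ⟨cs', hcs, rfl⟩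
    · have h₁ := ih (ts1 ++ cs1) (ts2 ++ [.node a2 cs2]) (by simp +arith)
        (by simpa using hts.append_context [] cs1)
      have h₂ := ih _ (ts2 ++ cs2) (by simp +arith) h
      have h₃ := ih ts1 ts2 (by omega) hts
      rw [zsDist_concat, zsDist_concat]
      omega
    · rw [zsDist_concat]
      omega
    · have h₂ := ih _ (ts2 ++ cs2) (by simp +arith) h
      rw [zsDist_concat, zsDist_concat]
      split_ifs <;> omega
    · have h₁ := ih (ts1 ++ cs1) (ts2 ++ [.node a2 cs2]) (by simp +arith)
        (by simpa using hcs.append_context ts1 [])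
      have h₂ := ih _ (ts2 ++ cs2) (by simp +arith) h
      have h₃ := ih cs1 cs2 (by omega) hcs
      rw [zsDist_concat, zsDist_concat]
      omega

theorem zsDist_le_of_editSteps_left {k : ℕ} {F H : Forest α} (h : EditSteps k F H)
    (G : Forest α) : zsDist F G ≤ zsDist H G + k := by
  induction h with
  | refl => simp
  | tail _ st ih => have := zsDist_le_of_editStep_left st G; omega

theorem zsDist_le_ed (F G : Forest α) : zsDist F G ≤ ed F G := by
  obtain ⟨k₁, k₂, H, hk, h₁, h₂⟩ := exists_editSteps_of_ed F G
  calc zsDist F G ≤ zsDist H G + k₁ := zsDist_le_of_editSteps_left h₁ G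
    _ = zsDist G H + k₁ := by rw [zsDist_comm]
    _ ≤ zsDist H H + k₂ + k₁ := by gcongr; exact zsDist_le_of_editSteps_left h₂ H
    _ = ed F G := by rw [zsDist_self, hk]; ring

theorem ed_le_zsDist (F G : Forest α) : ed F G ≤ zsDist F G := by
  induction F, G using Forest.rightmost_induction with
  | nil_left G => simpa using ed_nil_left_le G
  | nil_right F => simpa using ed_nil_right_le F
  | concat ts1 ts2 cs1 cs2 a1 a2 ih =>
    rw [zsDist_concat]
    refine le_min (le_min ?_ ?_) ?_
    · exact (ed_le_of_editStep_left (.delete_last ts1 a1 cs1) _).trans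
        (by gcongr; exact ih _ _ (by simp +arith))
    · exact (ed_le_of_editStep_right _ (.delete_last ts2 a2 cs2)).trans
        (by gcongr; exact ih _ _ (by simp +arith))
    · exact (ed_concat_le ts1 ts2 cs1 cs2 a1 a2).trans
        (by gcongr <;> exact ih _ _ (by omega))

theorem ed_eq_zsDist (F G : Forest α) : ed F G = zsDist F G :=
  (ed_le_zsDist F G).antisymm (zsDist_le_ed F G)

end ZhangShasha

/-- The Zhang–Shasha recurrence for tree edit distance: `ed(F, ∅) = |F|`, and for
nonempty forests `F1 = ts1 + a1(cs1)` and `F2 = ts2 + a2(cs2)` (rightmost roots `a1(cs1)`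
and `a2(cs2)`),
`ed(F1, F2) = min( ed(F1 - r_{F1}, F2) + 1, ed(F1, F2 - r_{F2}) + 1,
ed(R°_{F1}, R°_{F2}) + ed(L'_{F1}, L'_{F2}) + δ(r_{F1}, r_{F2}) )`. -/
theorem zhang_shasha_recurrence {α : Type} [DecidableEq α] :
    (∀ F : Forest α, ed F ([] : Forest α) = Forest.size F) ∧
    ∀ (ts1 ts2 cs1 cs2 : Forest α) (a1 a2 : α),
      ed (ts1 ++ [Tree'.node a1 cs1]) (ts2 ++ [Tree'.node a2 cs2]) =
        min (min (ed (ts1 ++ cs1) (ts2 ++ [Tree'.node a2 cs2]) + 1)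
                 (ed (ts1 ++ [Tree'.node a1 cs1]) (ts2 ++ cs2) + 1))
            (ed cs1 cs2 + ed ts1 ts2 + (if a1 = a2 then 0 else 1)) := by
  refine ⟨fun F => by rw [ed_eq_zsDist, zsDist_nil_right], fun ts1 ts2 cs1 cs2 a1 a2 => ?_⟩
  simp only [ed_eq_zsDist]
  exact zsDist_concat ts1 ts2 cs1 cs2 a1 a2
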